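/- arXiv:1812.02721 — 2 statements merged into one kernel-verified Lean document; each statement's English description precedes it below -/
import Mathlib

section
/- Let p be a prime, L = p^N, and h ∈ 𝔽_p[x] with h(1) ≠ 0 and deg h = δ. Let 0 ≤ m < L with m·δ < L, and set K_m^h = U_m(u)·h(v)^m ∈ R. Then for every integer n ≥ 0 the canonical representative of t_h^n(K_m^h) has v-degree exactly m·δ; in particular, K_m^h is consistently (m·δ)-local under t_h. -/
open Polynomial

noncomputable section

/-- The ring `R = 𝔽_p[u,v]/(u^L − 1, v^L − 1)`, modelled as the group algebra of
`ℤ/L × ℤ/L` over `𝔽_p`; the exponent pair of a monomial `u^i v^j` is `(i, j)`. -/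
abbrev R (p L : ℕ) : Type := AddMonoidAlgebra (ZMod p) (ZMod L × ZMod L)

/-- The image of `u` in `R`. -/
def uu (p L : ℕ) : R p L := AddMonoidAlgebra.single ((1 : ZMod L), (0 : ZMod L)) 1

/-- The image of `v` in `R`. -/
def vv (p L : ℕ) : R p L := AddMonoidAlgebra.single ((0 : ZMod L), (1 : ZMod L)) 1

/-- `u` as a unit of `R`. -/
def uUnit (p L : ℕ) : (R p L)ˣ where
  val := AddMonoidAlgebra.single ((1 : ZMod L), (0 : ZMod L)) 1
  inv := AddMonoidAlgebra.single ((-1 : ZMod L), (0 : ZMod L)) 1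
  val_inv := by
    rw [AddMonoidAlgebra.single_mul_single]
    simp [AddMonoidAlgebra.one_def] <;> rfl
  inv_val := by
    rw [AddMonoidAlgebra.single_mul_single]
    simp [AddMonoidAlgebra.one_def] <;> rfl

/-- `v` as a unit of `R`. -/
def vUnit (p L : ℕ) : (R p L)ˣ where
  val := AddMonoidAlgebra.single ((0 : ZMod L), (1 : ZMod L)) 1
  inv := AddMonoidAlgebra.single ((0 : ZMod L), (-1 : ZMod L)) 1
  val_inv := by
    rw [AddMonoidAlgebra.single_mul_single]
    simp [AddMonoidAlgebra.one_def] <;> rfl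
  inv_val := by
    rw [AddMonoidAlgebra.single_mul_single]
    simp [AddMonoidAlgebra.one_def] <;> rfl

/-- `deg_v W`: the `v`-degree of the canonical representative of `W`
(each exponent of `v` is represented by its value in `{0, …, L−1}`). -/
def degV {p L : ℕ} (W : R p L) : ℕ := W.coeff.support.sup fun a => a.2.val

/-- The evolution operator `t_h`: multiplication by `h(v)⁻¹ · h(uv)`
(`Ring.inverse` is the genuine inverse whenever `h(v)` is a unit, in particular when
`h(1) ≠ 0`). -/
def th {p L : ℕ} (h : (ZMod p)[X]) (W : R p L) : R p L :=
  Ring.inverse (aeval (vv p L) h) * aeval (uu p L * vv p L) h * W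

/-- `W` is consistently `ℓ`-local under `t_h`: `t_h^n W` is `ℓ`-local for all `n ≥ 0`. -/
def ConsLocal {p L : ℕ} (h : (ZMod p)[X]) (ℓ : ℕ) (W : R p L) : Prop :=
  ∀ n : ℕ, degV ((th h)^[n] W) ≤ ℓ

/-- `U_m(u) = (u − 1)^(L − 1 − m)`. -/
def Um (p L : ℕ) (m : ℕ) : R p L := (uu p L - 1) ^ (L - 1 - m)

/-- `g` is the (unique) expansion of `W` as `W = Σ_{m<L} U_m(u) · g_m(v)`
with `deg g_m < L` for all `m < L`. -/
def IsExpansion (p L : ℕ) (W : R p L) (g : ℕ → (ZMod p)[X]) : Prop :=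
  (∀ m < L, (g m).degree < (L : WithBot ℕ)) ∧
    W = ∑ m ∈ Finset.range L, Um p L m * aeval (vv p L) (g m)

/-- `(V_m)` generates an optimal basis for `t_h` at locality `ℓ` at size `L`:
for every `ℓ`-local `W ∈ R`, `W` is consistently `ℓ`-local under `t_h` iff
`V_m ∣ W_m` (in `𝔽_p[v]`) for all `m < L`, where `(W_m)` is the expansion of `W`
in the basis `(U_m)`. -/
def GenOptBasis (p L : ℕ) (h : (ZMod p)[X]) (V : ℕ → (ZMod p)[X]) (ℓ : ℕ) : Prop :=
  ∀ W : R p L, degV W ≤ ℓ →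
    (ConsLocal h ℓ W ↔ ∀ g : ℕ → (ZMod p)[X], IsExpansion p L W g → ∀ m < L, V m ∣ g m)

/-! ### Auxiliary development for Statement 3 -/

namespace S3

open Finset AddMonoidAlgebra

variable {p : ℕ}

/-- The `u`-only group algebra. -/
abbrev S (p L : ℕ) : Type := AddMonoidAlgebra (ZMod p) (ZMod L)

/-- The generator of `S`. -/
def up (p L : ℕ) : S p L := AddMonoidAlgebra.single (1 : ZMod L) 1

section basic

variable {L : ℕ}

theorem vv_pow (i : ℕ) : (vv p L) ^ i = AddMonoidAlgebra.single ((0 : ZMod L), (i : ZMod L)) 1 := by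
  rw [vv, AddMonoidAlgebra.single_pow, one_pow]
  congr 1
  simp [Prod.ext_iff]

theorem uu_pow (i : ℕ) : (uu p L) ^ i = AddMonoidAlgebra.single (((i : ZMod L)), (0 : ZMod L)) 1 := by
  rw [uu, AddMonoidAlgebra.single_pow, one_pow]
  congr 1
  simp [Prod.ext_iff]

theorem up_pow (i : ℕ) : (up p L) ^ i = AddMonoidAlgebra.single ((i : ZMod L)) 1 := by
  rw [up, AddMonoidAlgebra.single_pow, one_pow]
  congr 1
  simp

theorem vv_pow_L : (vv p L) ^ L = 1 := by
  rw [vv_pow]; simp [AddMonoidAlgebra.one_def] <;> rfl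

theorem uu_pow_L : (uu p L) ^ L = 1 := by
  rw [uu_pow]; simp [AddMonoidAlgebra.one_def] <;> rfl

theorem up_pow_L : (up p L) ^ L = 1 := by
  rw [up_pow]; simp [AddMonoidAlgebra.one_def]

instance [Fact p.Prime] : CharP (S p L) p :=
  charP_of_injective_algebraMap' (ZMod p) p

instance [Fact p.Prime] : CharP (R p L) p :=
  charP_of_injective_algebraMap' (ZMod p) p

end basic

section nilp

variable [hp : Fact p.Prime] {N : ℕ}

theorem uu_sub_one_pow_L : (uu p (p ^ N) - 1) ^ (p ^ N) = 0 := by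
  rw [sub_pow_char_pow, uu_pow_L, one_pow, sub_self]

theorem vv_sub_one_pow_L : (vv p (p ^ N) - 1) ^ (p ^ N) = 0 := by
  rw [sub_pow_char_pow, vv_pow_L, one_pow, sub_self]

theorem up_sub_one_pow_L : (up p (p ^ N) - 1) ^ (p ^ N) = 0 := by
  rw [sub_pow_char_pow, up_pow_L, one_pow, sub_self]

theorem uu_sub_one_pow_eq_zero {t : ℕ} (ht : p ^ N ≤ t) : (uu p (p ^ N) - 1) ^ t = 0 := by
  rw [← Nat.sub_add_cancel ht, pow_add, uu_sub_one_pow_L, mul_zero]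

theorem up_sub_one_pow_eq_zero {t : ℕ} (ht : p ^ N ≤ t) : (up p (p ^ N) - 1) ^ t = 0 := by
  rw [← Nat.sub_add_cancel ht, pow_add, up_sub_one_pow_L, mul_zero]

theorem isNilpotent_vv_sub_one : IsNilpotent (vv p (p ^ N) - 1) :=
  ⟨p ^ N, vv_sub_one_pow_L⟩

theorem isNilpotent_up_sub_one : IsNilpotent (up p (p ^ N) - 1) :=
  ⟨p ^ N, up_sub_one_pow_L⟩

/-- unit + nilpotent·q is a unit. -/
theorem isUnit_aux {A : Type*} [CommRing A] [Algebra (ZMod p) A] (c : ZMod p) (hc : c ≠ 0)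
    (z q : A) (hz : IsNilpotent z) : IsUnit (algebraMap (ZMod p) A c + z * q) := by
  haveI : Fact p.Prime := hp
  have hn : IsNilpotent (z * q) := by
    rw [mul_comm]
    exact (Commute.all q z).isNilpotent_mul_left hz
  exact IsNilpotent.isUnit_add_left_of_commute hn
    (IsUnit.map _ (Ne.isUnit hc)) (Commute.all _ _)

/-- `h(v)` is a unit in `R` when `h(1) ≠ 0`. -/
theorem isUnit_aeval_vv (h : (ZMod p)[X]) (hh1 : h.eval 1 ≠ 0) :
    IsUnit (Polynomial.aeval (vv p (p ^ N)) h) := by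
  obtain ⟨q, hq⟩ : (X : (ZMod p)[X]) - C 1 ∣ h - C (h.eval 1) := by
    rw [dvd_iff_isRoot]
    simp [Polynomial.IsRoot]
  have h0 := congrArg (Polynomial.aeval (vv p (p ^ N))) hq
  simp only [map_sub, map_mul, aeval_X, aeval_C, map_one] at h0
  have h2 : Polynomial.aeval (vv p (p ^ N)) h
      = algebraMap (ZMod p) _ (h.eval 1)
        + (vv p (p ^ N) - 1) * Polynomial.aeval (vv p (p ^ N)) q := by
    rw [← h0]; ring
  rw [h2]
  exact isUnit_aux _ hh1 _ _ isNilpotent_vv_sub_one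

end nilp

section degV

variable {L : ℕ}

theorem degV_add_le (x y : R p L) : degV (x + y) ≤ max (degV x) (degV y) := by
  classical
  refine le_trans (Finset.sup_mono Finsupp.support_add) ?_
  rw [Finset.sup_union]
  exact le_rfl

theorem degV_mul_le (x y : R p L) : degV (x * y) ≤ degV x + degV y := by
  classical
  refine Finset.sup_le fun a ha => ?_
  obtain ⟨b, hb, c, hc, rfl⟩ := Finset.mem_add.mp (AddMonoidAlgebra.support_coeff_mul_subset x y ha)
  exact le_trans (ZMod.val_add_le _ _) (add_le_add (Finset.le_sup (f := fun a => a.2.val) hb) (Finset.le_sup (f := fun a => a.2.val) hc))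

theorem degV_sum_le {α : Type*} (s : Finset α) (f : α → R p L) (D : ℕ)
    (hf : ∀ a ∈ s, degV (f a) ≤ D) : degV (∑ a ∈ s, f a) ≤ D := by
  classical
  induction s using Finset.induction_on with
  | empty => simp [degV]
  | @insert a s' hx ih =>
      rw [Finset.sum_insert hx]
      refine le_trans (degV_add_le _ _) ?_
      simp only [max_le_iff]
      exact ⟨hf a (Finset.mem_insert_self a s'), ih fun b hb => hf b (Finset.mem_insert_of_mem hb)⟩

theorem degV_single (a : ZMod L × ZMod L) (c : ZMod p) :
    degV (AddMonoidAlgebra.single a c) ≤ a.2.val := by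
  classical
  refine Finset.sup_le fun b hb => ?_
  have hb' := Finsupp.support_single_subset hb
  simp only [Finset.mem_singleton] at hb'
  subst hb'; exact le_rfl

theorem degV_one_le : degV (1 : R p L) ≤ 0 := by
  have h1 : (1 : R p L) = AddMonoidAlgebra.single (0, 0) 1 := by
    simp [AddMonoidAlgebra.one_def] <;> rfl
  rw [h1]
  simpa using degV_single ((0 : ZMod L), (0 : ZMod L)) 1

theorem degV_uu_sub_one_le : degV (uu p L - 1) ≤ 0 := by
  rw [sub_eq_add_neg]
  refine le_trans (degV_add_le _ _) ?_
  have h2 : degV (-(1 : R p L)) ≤ 0 := by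
    rw [show degV (-(1 : R p L)) = degV (1 : R p L) by simp [degV, Finsupp.support_neg]]
    exact degV_one_le
  have h1 : degV (uu p L) ≤ 0 := by simpa [uu] using degV_single ((1 : ZMod L), (0 : ZMod L)) 1
  omega

theorem degV_uu_sub_one_pow_le (t : ℕ) : degV ((uu p L - 1) ^ t) ≤ 0 := by
  induction t with
  | zero => simpa using degV_one_le
  | succ t ih =>
      rw [pow_succ]
      have := degV_mul_le ((uu p L - 1) ^ t) (uu p L - 1)
      have := degV_uu_sub_one_le (p := p) (L := L)
      omega

theorem degV_smul_le (c : ZMod p) (x : R p L) : degV (c • x) ≤ degV x :=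
  Finset.sup_mono Finsupp.support_smul

theorem degV_aeval_vv_le (q : (ZMod p)[X]) (hq : q.natDegree < L) :
    degV (Polynomial.aeval (vv p L) q) ≤ q.natDegree := by
  rw [Polynomial.aeval_eq_sum_range (p := q) (vv p L)]
  refine degV_sum_le _ _ _ fun i hi => ?_
  rw [Finset.mem_range] at hi
  refine le_trans (degV_smul_le _ _) ?_
  rw [vv_pow]
  refine le_trans (degV_single _ _) ?_
  have : ((i : ZMod L)).val = i := ZMod.val_cast_of_lt (by omega)
  simp only [this]
  omega

end degV

end S3
namespace S3

open Finset AddMonoidAlgebra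

variable {p : ℕ}

section slice

variable {L : ℕ}

/-- The slice map extracting the coefficients of `v^b0`. -/
def σ (b0 : ZMod L) : R p L →+ S p L :=
  AddMonoidAlgebra.comapDomainAddMonoidHom (fun a : ZMod L => (a, b0))
    (fun _ _ hx => congrArg Prod.fst hx)

theorem σ_apply (b0 : ZMod L) (W : R p L) (x : ZMod L) : (σ b0 W).coeff x = W.coeff (x, b0) := rfl

theorem σ_single (b0 : ZMod L) (a b : ZMod L) (c : ZMod p) :
    σ b0 (AddMonoidAlgebra.single (a, b) c)
      = if b = b0 then AddMonoidAlgebra.single a c else 0 := by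
  ext x
  rw [σ_apply]
  simp only [AddMonoidAlgebra.coeff_single, Finsupp.single_apply, Prod.mk.injEq]
  split_ifs <;> simp_all

theorem σ_smul (b0 : ZMod L) (c : ZMod p) (W : R p L) : σ b0 (c • W) = c • σ b0 W := by
  ext x
  rw [σ_apply, AddMonoidAlgebra.coeff_smul_apply, AddMonoidAlgebra.coeff_smul_apply, σ_apply]

theorem σ_uu_mul (b0 : ZMod L) (W : R p L) : σ b0 (uu p L * W) = up p L * σ b0 W := by
  ext x
  rw [σ_apply, uu, up, AddMonoidAlgebra.coeff_single_mul_apply, AddMonoidAlgebra.coeff_single_mul_apply,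
    σ_apply]
  congr 2
  simp [Prod.ext_iff]

theorem σ_uu_sub_one_pow_mul (b0 : ZMod L) (t : ℕ) (W : R p L) :
    σ b0 ((uu p L - 1) ^ t * W) = (up p L - 1) ^ t * σ b0 W := by
  induction t generalizing W with
  | zero => simp
  | succ t ih =>
      have h1 : (uu p L - 1) ^ (t + 1) * W = (uu p L - 1) ^ t * ((uu p L - 1) * W) := by ring
      have h2 : (uu p L - 1) * W = uu p L * W - W := by ring
      rw [h1, ih, h2, map_sub, σ_uu_mul]
      ring

theorem σ_aeval (q : (ZMod p)[X]) {b0 : ℕ} (hb0 : b0 < L) (hq : q.natDegree < L) :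
    σ ((b0 : ZMod L)) (Polynomial.aeval (vv p L) q)
      = AddMonoidAlgebra.single 0 (q.coeff b0) := by
  rw [Polynomial.aeval_eq_sum_range' hq, map_sum]
  have hterm : ∀ i ∈ Finset.range L,
      σ ((b0 : ZMod L)) (q.coeff i • vv p L ^ i)
        = if i = b0 then AddMonoidAlgebra.single (0 : ZMod L) (q.coeff i) else 0 := by
    intro i hi
    rw [Finset.mem_range] at hi
    rw [σ_smul, vv_pow, σ_single]
    have hiff : ((i : ZMod L) = (b0 : ZMod L)) ↔ i = b0 := by
      constructor
      · intro hcast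
        have := congrArg ZMod.val hcast
        rwa [ZMod.val_cast_of_lt hi, ZMod.val_cast_of_lt hb0] at this
      · rintro rfl; rfl
    by_cases hib : i = b0
    · simp [hib]
    · rw [if_neg (fun hc => hib (hiff.mp hc)), if_neg hib, smul_zero]
  rw [Finset.sum_congr rfl hterm, Finset.sum_ite_eq' (Finset.range L) b0, if_pos (Finset.mem_range.mpr hb0)]

theorem le_degV_of_σ_ne {b0 : ℕ} (hb0 : b0 < L) (W : R p L)
    (hσ : σ ((b0 : ZMod L)) W ≠ 0) : b0 ≤ degV W := by
  obtain ⟨x, hx⟩ := Finsupp.ne_iff.mp (mt AddMonoidAlgebra.ext hσ)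
  rw [σ_apply, AddMonoidAlgebra.coeff_zero, Finsupp.coe_zero, Pi.zero_apply] at hx
  have hmem : (x, (b0 : ZMod L)) ∈ W.coeff.support := Finsupp.mem_support_iff.mpr hx
  have h2 := Finset.le_sup (f := fun a : ZMod L × ZMod L => a.2.val) hmem
  simp only at h2
  rwa [ZMod.val_cast_of_lt hb0] at h2

end slice

section nonzero

variable [hp : Fact p.Prime] {N : ℕ} (hN : 1 ≤ N)

theorem up_sub_one_pow_pred_ne_zero (hN : 1 ≤ N) :
    (up p (p ^ N) - 1) ^ (p ^ N - 1) ≠ 0 := by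
  haveI : NeZero (p ^ N) := ⟨pow_ne_zero _ hp.out.ne_zero⟩
  set L := p ^ N with hL
  have hL2 : 2 ≤ L := by
    calc 2 ≤ p := hp.out.two_le
    _ = p ^ 1 := (pow_one p).symm
    _ ≤ p ^ N := Nat.pow_le_pow_right (Nat.le_of_lt hp.out.one_lt) hN
  set f : (ZMod p)[X] := X ^ L - 1 with hf
  set A := AdjoinRoot f with hA
  have hroot : (AdjoinRoot.root f) ^ L = 1 := by
    have h0 : AdjoinRoot.mk f f = 0 := AdjoinRoot.mk_self
    rw [hf, map_sub, map_pow, AdjoinRoot.mk_X, map_one, sub_eq_zero] at h0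
    exact h0
  -- the monoid hom `Multiplicative (ZMod L) →* A`
  have hmul : ∀ x y : Multiplicative (ZMod L),
      (AdjoinRoot.root f) ^ (Multiplicative.toAdd (x * y)).val
        = (AdjoinRoot.root f) ^ (Multiplicative.toAdd x).val
          * (AdjoinRoot.root f) ^ (Multiplicative.toAdd y).val := by
    intro x y
    set a := Multiplicative.toAdd x
    set b := Multiplicative.toAdd y
    have htoadd : Multiplicative.toAdd (x * y) = a + b := rfl
    rw [htoadd, ← pow_add, ZMod.val_add]
    conv_rhs => rw [← Nat.mod_add_div (a.val + b.val) L, pow_add, pow_mul, hroot, one_pow, mul_one]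
  set F : Multiplicative (ZMod L) →* A :=
    { toFun := fun x => (AdjoinRoot.root f) ^ (Multiplicative.toAdd x).val
      map_one' := by
        show (AdjoinRoot.root f) ^ (Multiplicative.toAdd (1 : Multiplicative (ZMod L))).val = 1
        have : Multiplicative.toAdd (1 : Multiplicative (ZMod L)) = 0 := rfl
        rw [this, ZMod.val_zero, pow_zero]
      map_mul' := hmul } with hF
  set ev : S p L →ₐ[ZMod p] A := AddMonoidAlgebra.lift (ZMod p) A (ZMod L) F with hev
  have hevup : ev (up p L) = AdjoinRoot.root f := by
    rw [up, hev, AddMonoidAlgebra.lift_single, one_smul, hF]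
    show (AdjoinRoot.root f) ^ (Multiplicative.toAdd (Multiplicative.ofAdd (1 : ZMod L))).val = _
    rw [show Multiplicative.toAdd (Multiplicative.ofAdd (1 : ZMod L)) = 1 from rfl, show (1:ZMod L) = ((1:ℕ):ZMod L) by simp, ZMod.val_cast_of_lt (by omega), pow_one]
  intro h0
  have h1 : ((AdjoinRoot.root f) - 1) ^ (L - 1) = 0 := by
    have := congrArg ev h0
    rw [map_pow, map_sub, map_one, hevup, map_zero] at this
    exact this
  have h2 : AdjoinRoot.mk f ((X - 1) ^ (L - 1)) = 0 := by
    rw [map_pow, map_sub, AdjoinRoot.mk_X, map_one, h1]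
  rw [AdjoinRoot.mk_eq_zero] at h2
  have hXL : f = (X - 1) ^ L := by
    rw [hf, hL, sub_pow_char_pow, one_pow]
  rw [hXL] at h2
  obtain ⟨r, hr⟩ := h2
  have hpow : ((X : (ZMod p)[X]) - 1) ^ L = (X - 1) ^ (L - 1) * (X - 1) := by
    rw [← pow_succ]; congr 1; omega
  have hX1 : ((X : (ZMod p)[X]) - 1) ≠ 0 := by
    have := Polynomial.X_sub_C_ne_zero (R := ZMod p) 1
    simpa using this
  have hcancel : (1 : (ZMod p)[X]) = (X - 1) * r := by
    apply mul_left_cancel₀ (pow_ne_zero (L - 1) hX1)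
    conv_lhs => rw [mul_one, hr, hpow, mul_assoc]
  have := congrArg (Polynomial.eval (1 : ZMod p)) hcancel
  simp at this

end nonzero

end S3
namespace S3

open Finset AddMonoidAlgebra

variable {p : ℕ}

section poly

/-- Taylor-type coefficients: `h((1+s)·t) = Σ_j s^j · (ee h δ j)(t)`. -/
def ee (h : (ZMod p)[X]) (δ j : ℕ) : (ZMod p)[X] :=
  ∑ i ∈ Finset.range (δ + 1), Polynomial.monomial i (h.coeff i * (i.choose j : ZMod p))

theorem ee_natDegree_le (h : (ZMod p)[X]) (δ j : ℕ) : (ee h δ j).natDegree ≤ δ := by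
  refine Polynomial.natDegree_sum_le_of_forall_le _ _ fun i hi => ?_
  rw [Finset.mem_range] at hi
  exact le_trans (Polynomial.natDegree_monomial_le _) (by omega)

theorem ee_zero (h : (ZMod p)[X]) {δ : ℕ} (hδ : h.natDegree = δ) : ee h δ 0 = h := by
  rw [ee]
  conv_rhs => rw [Polynomial.as_sum_range' h (δ + 1) (by omega)]
  refine Finset.sum_congr rfl fun i _ => ?_
  simp

theorem ee_eq_zero (h : (ZMod p)[X]) {δ j : ℕ} (hj : δ < j) : ee h δ j = 0 := by
  rw [ee]
  refine Finset.sum_eq_zero fun i hi => ?_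
  rw [Finset.mem_range] at hi
  rw [Nat.choose_eq_zero_of_lt (by omega), Nat.cast_zero, mul_zero, Polynomial.monomial_zero_right]

/-- The expansion of `h(uv)` in powers of `u − 1`. -/
theorem aeval_uv {L : ℕ} (h : (ZMod p)[X]) {δ : ℕ} (hδ : h.natDegree = δ) :
    Polynomial.aeval (uu p L * vv p L) h
      = ∑ j ∈ Finset.range (δ + 1), (uu p L - 1) ^ j * Polynomial.aeval (vv p L) (ee h δ j) := by
  have hdlt : h.natDegree < δ + 1 := by omega
  rw [Polynomial.aeval_eq_sum_range' hdlt]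
  have hrhs : ∀ j, Polynomial.aeval (vv p L) (ee h δ j)
      = ∑ i ∈ Finset.range (δ + 1),
          algebraMap (ZMod p) (R p L) (h.coeff i) * (i.choose j : R p L) * vv p L ^ i := by
    intro j
    rw [ee, map_sum]
    refine Finset.sum_congr rfl fun i _ => ?_
    rw [Polynomial.aeval_monomial, map_mul, map_natCast]
  simp_rw [hrhs, Finset.mul_sum]
  rw [Finset.sum_comm]
  refine Finset.sum_congr rfl fun i hi => ?_
  rw [Finset.mem_range] at hi
  have hstep : ∀ j, (uu p L - 1) ^ j *
        (algebraMap (ZMod p) (R p L) (h.coeff i) * (i.choose j : R p L) * vv p L ^ i)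
      = algebraMap (ZMod p) (R p L) (h.coeff i) * vv p L ^ i
          * ((uu p L - 1) ^ j * 1 ^ (i - j) * (i.choose j : R p L)) := by
    intro j; ring
  rw [Finset.sum_congr rfl fun j _ => hstep j, ← Finset.mul_sum]
  have hshrink : ∑ j ∈ Finset.range (δ + 1),
        (uu p L - 1) ^ j * 1 ^ (i - j) * (i.choose j : R p L)
      = ∑ j ∈ Finset.range (i + 1), (uu p L - 1) ^ j * 1 ^ (i - j) * (i.choose j : R p L) := by
    refine (Finset.sum_subset (Finset.range_subset_range.mpr (by omega)) fun j _ hj => ?_).symm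
    rw [Finset.mem_range, not_lt] at hj
    rw [Nat.choose_eq_zero_of_lt (by omega), Nat.cast_zero, mul_zero]
  rw [hshrink, ← add_pow (uu p L - 1) 1 i, sub_add_cancel, Algebra.smul_def, mul_pow]
  ring

/-- The coefficient system of the evolved state. -/
def gg (h : (ZMod p)[X]) (δ : ℕ) : ℕ → ℕ → (ZMod p)[X]
  | 0, k => if k = 0 then 1 else 0
  | n + 1, k => gg h δ n k +
      ∑ j ∈ Finset.range k, ee h δ (j + 1) * h ^ j * gg h δ n (k - (j + 1))

theorem gg_zero_right (h : (ZMod p)[X]) (δ : ℕ) : ∀ n, gg h δ n 0 = 1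
  | 0 => if_pos rfl
  | n + 1 => by rw [gg, gg_zero_right h δ n]; simp

theorem gg_natDegree_le (h : (ZMod p)[X]) {δ : ℕ} (hδ : h.natDegree = δ) :
    ∀ n k, (gg h δ n k).natDegree ≤ k * δ := by
  intro n
  induction n with
  | zero =>
      intro k
      rw [gg]
      split_ifs <;> simp
  | succ n ih =>
      intro k
      rw [gg]
      refine le_trans (Polynomial.natDegree_add_le _ _) (max_le (le_trans (ih k) le_rfl) ?_)
      refine Polynomial.natDegree_sum_le_of_forall_le _ _ fun j hj => ?_
      rw [Finset.mem_range] at hj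
      have h1 : (ee h δ (j + 1) * h ^ j * gg h δ n (k - (j + 1))).natDegree
          ≤ (ee h δ (j + 1)).natDegree + (h ^ j).natDegree + (gg h δ n (k - (j + 1))).natDegree := by
        refine le_trans (Polynomial.natDegree_mul_le) ?_
        exact Nat.add_le_add_right Polynomial.natDegree_mul_le _
      refine le_trans h1 ?_
      have h2 := ee_natDegree_le h δ (j + 1)
      have h3 : (h ^ j).natDegree ≤ j * δ := le_trans (Polynomial.natDegree_pow_le) (by rw [hδ])
      have h4 := ih (k - (j + 1))
      have h5 : δ + j * δ + (k - (j + 1)) * δ = k * δ := by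
        have : 1 + j + (k - (j + 1)) = k := by omega
        calc δ + j * δ + (k - (j + 1)) * δ = (1 + j + (k - (j + 1))) * δ := by ring
        _ = k * δ := by rw [this]
      omega

end poly

section FF

/-- The evolved state in closed form. -/
def FF (p L : ℕ) (h : (ZMod p)[X]) (δ m n : ℕ) : R p L :=
  ∑ k ∈ Finset.range (m + 1),
    (uu p L - 1) ^ (L - 1 - m + k) * Polynomial.aeval (vv p L) (h ^ (m - k) * gg h δ n k)

theorem FF_zero (p L : ℕ) (h : (ZMod p)[X]) (δ m : ℕ) :
    FF p L h δ m 0 = Um p L m * Polynomial.aeval (vv p L) h ^ m := by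
  rw [FF, Finset.sum_eq_single 0]
  · rw [gg_zero_right, mul_one, Nat.sub_zero, Nat.add_zero, map_pow, Um]
  · intro k _ hk
    rw [show gg h δ 0 k = 0 from if_neg hk, mul_zero, map_zero, mul_zero]
  · intro hmem
    exact absurd (Finset.mem_range.mpr (by omega)) hmem

/-- Generic off-diagonal term. -/
def GG (p L : ℕ) (h : (ZMod p)[X]) (δ m n k j : ℕ) : R p L :=
  (uu p L - 1) ^ (L - 1 - m + k) * Polynomial.aeval (vv p L) (ee h δ (j + 1))
    * Polynomial.aeval (vv p L) (h ^ (m + (j + 1) - k))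
    * Polynomial.aeval (vv p L) (gg h δ n (k - (j + 1)))

variable [hp : Fact p.Prime] {N : ℕ}

/-- The key step identity. -/
theorem key_step (h : (ZMod p)[X]) {δ m : ℕ} (hδ : h.natDegree = δ) (hm : m < p ^ N) (n : ℕ) :
    Polynomial.aeval (vv p (p ^ N)) h * FF p (p ^ N) h δ m (n + 1)
      = Polynomial.aeval (uu p (p ^ N) * vv p (p ^ N)) h * FF p (p ^ N) h δ m n := by
  set L := p ^ N with hL
  -- LHS expansion
  have hlhs : Polynomial.aeval (vv p L) h * FF p L h δ m (n + 1)
      = (∑ k ∈ Finset.range (m + 1), (uu p L - 1) ^ (L - 1 - m + k)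
            * Polynomial.aeval (vv p L) (h ^ (m - k + 1) * gg h δ n k))
        + ∑ k ∈ Finset.range (m + 1), ∑ j ∈ Finset.range k, GG p L h δ m n k j := by
    rw [FF, Finset.mul_sum, ← Finset.sum_add_distrib]
    refine Finset.sum_congr rfl fun k hk => ?_
    rw [Finset.mem_range] at hk
    have hk' : k ≤ m := by omega
    rw [show gg h δ (n + 1) k
        = gg h δ n k + ∑ j ∈ Finset.range k, ee h δ (j + 1) * h ^ j * gg h δ n (k - (j + 1))
        from rfl]
    rw [mul_add, map_add, mul_add, mul_add]
    congr 1
    · -- diagonal part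
      simp only [map_mul, map_pow]
      ring
    · -- off-diagonal part
      rw [Finset.mul_sum, map_sum, Finset.mul_sum, Finset.mul_sum]
      refine Finset.sum_congr rfl fun j hj => ?_
      rw [Finset.mem_range] at hj
      rw [GG, show m + (j + 1) - k = m - k + 1 + j by omega]
      simp only [map_mul, map_pow]
      rw [show (Polynomial.aeval (vv p L) h : R p L) ^ (m - k + 1 + j)
          = Polynomial.aeval (vv p L) h ^ (m - k) * Polynomial.aeval (vv p L) h ^ (1 + j) by
        rw [← pow_add]; congr 1; omega]
      rw [pow_add (Polynomial.aeval (vv p L) h : R p L) 1 j, pow_one]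
      ring
  -- RHS expansion
  have hrhs : Polynomial.aeval (uu p L * vv p L) h * FF p L h δ m n
      = (∑ k ∈ Finset.range (m + 1), (uu p L - 1) ^ (L - 1 - m + k)
            * Polynomial.aeval (vv p L) (h ^ (m - k + 1) * gg h δ n k))
        + ∑ k ∈ Finset.range (m + 1), ∑ j ∈ Finset.range δ, GG p L h δ m n (k + (j + 1)) j := by
    rw [aeval_uv h hδ, FF, Finset.sum_mul_sum, Finset.sum_comm, ← Finset.sum_add_distrib]
    refine Finset.sum_congr rfl fun k hk => ?_
    rw [Finset.mem_range] at hk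
    rw [Finset.sum_range_succ' (fun j => (uu p L - 1) ^ j * Polynomial.aeval (vv p L) (ee h δ j)
        * ((uu p L - 1) ^ (L - 1 - m + k) * Polynomial.aeval (vv p L) (h ^ (m - k) * gg h δ n k)))]
    rw [add_comm]
    congr 1
    · -- j = 0 term
      rw [pow_zero, one_mul, ee_zero h hδ]
      simp only [map_mul, map_pow]
      ring
    · -- j ≥ 1 terms
      refine Finset.sum_congr rfl fun j hj => ?_
      rw [GG, show k + (j + 1) - (j + 1) = k by omega,
        show m + (j + 1) - (k + (j + 1)) = m - k by omega,
        show L - 1 - m + (k + (j + 1)) = (j + 1) + (L - 1 - m + k) by omega]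
      simp only [map_mul, map_pow, pow_add]
      ring
  rw [hlhs, hrhs]
  congr 1
  -- the combinatorial reindexing
  rw [Finset.sum_sigma' (Finset.range (m + 1)) (fun k => Finset.range k)
      (fun k j => GG p L h δ m n k j),
    Finset.sum_sigma' (Finset.range (m + 1)) (fun _ => Finset.range δ)
      (fun k j => GG p L h δ m n (k + (j + 1)) j)]
  have hzero1 : ∀ x ∈ (Finset.range (m + 1)).sigma (fun k => Finset.range k),
      GG p L h δ m n x.1 x.2 ≠ 0 → x.2 < δ := by
    intro x _ hne
    by_contra hge
    refine hne ?_
    rw [GG, ee_eq_zero h (show δ < x.2 + 1 by omega), map_zero, mul_zero, zero_mul, zero_mul]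
  have hzero2 : ∀ x ∈ (Finset.range (m + 1)).sigma (fun _ => Finset.range δ),
      GG p L h δ m n (x.1 + (x.2 + 1)) x.2 ≠ 0 → x.1 + (x.2 + 1) ≤ m := by
    intro x _ hne
    by_contra hgt
    refine hne ?_
    rw [GG, uu_sub_one_pow_eq_zero (show p ^ N ≤ L - 1 - m + (x.1 + (x.2 + 1)) by omega),
      zero_mul, zero_mul, zero_mul]
  rw [← Finset.sum_filter_of_ne hzero1, ← Finset.sum_filter_of_ne hzero2]
  refine Finset.sum_nbij' (fun x => ⟨x.1 - (x.2 + 1), x.2⟩) (fun y => ⟨y.1 + (y.2 + 1), y.2⟩)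
    ?_ ?_ ?_ ?_ ?_
  · intro x hx
    simp only [Finset.mem_filter, Finset.mem_sigma, Finset.mem_range] at hx ⊢
    omega
  · intro y hy
    simp only [Finset.mem_filter, Finset.mem_sigma, Finset.mem_range] at hy ⊢
    omega
  · intro x hx
    simp only [Finset.mem_filter, Finset.mem_sigma, Finset.mem_range] at hx
    exact Sigma.ext (by simp; omega) (by simp)
  · intro y hy
    simp only [Finset.mem_filter, Finset.mem_sigma, Finset.mem_range] at hy
    exact Sigma.ext (by simp) (by simp)
  · intro x hx
    simp only [Finset.mem_filter, Finset.mem_sigma, Finset.mem_range] at hx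
    rw [show x.1 - (x.2 + 1) + (x.2 + 1) = x.1 by omega]

theorem FF_step (h : (ZMod p)[X]) (hh1 : h.eval 1 ≠ 0) {δ m : ℕ} (hδ : h.natDegree = δ)
    (hm : m < p ^ N) (n : ℕ) :
    th h (FF p (p ^ N) h δ m n) = FF p (p ^ N) h δ m (n + 1) := by
  have hu := isUnit_aeval_vv (N := N) h hh1
  rw [th, mul_assoc, ← key_step h hδ hm n, ← mul_assoc,
    Ring.inverse_mul_cancel _ hu, one_mul]

theorem iterate_eq (h : (ZMod p)[X]) (hh1 : h.eval 1 ≠ 0) {δ m : ℕ} (hδ : h.natDegree = δ)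
    (hm : m < p ^ N) (n : ℕ) :
    (th h)^[n] (Um p (p ^ N) m * Polynomial.aeval (vv p (p ^ N)) h ^ m)
      = FF p (p ^ N) h δ m n := by
  induction n with
  | zero => rw [Function.iterate_zero_apply, FF_zero]
  | succ n ih => rw [Function.iterate_succ_apply', ih, FF_step h hh1 hδ hm n]

end FF

end S3
/-- for `K_m^h = U_m(u) · h(v)^m` with `m < L` and `m · δ < L`
(`δ = deg h`), the canonical representative of `t_h^n (K_m^h)` has `v`-degree exactly
`m · δ` for every `n ≥ 0`; in particular `K_m^h` is consistently `(m·δ)`-local. -/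
theorem statement3 (p N : ℕ) (hp : p.Prime) (hN : 1 ≤ N)
    (h : (ZMod p)[X]) (hh1 : h.eval 1 ≠ 0) (δ m : ℕ) (hδ : h.natDegree = δ)
    (hm : m < p ^ N) (hmδ : m * δ < p ^ N) :
    (∀ n : ℕ, degV ((th h)^[n] (Um p (p ^ N) m * aeval (vv p (p ^ N)) h ^ m)) = m * δ) ∧
      ConsLocal h (m * δ) (Um p (p ^ N) m * aeval (vv p (p ^ N)) h ^ m) := by
  haveI : Fact p.Prime := ⟨hp⟩
  have hconj : ∀ n : ℕ, (th h)^[n] (Um p (p ^ N) m * aeval (vv p (p ^ N)) h ^ m)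
      = S3.FF p (p ^ N) h δ m n := fun n => S3.iterate_eq h hh1 hδ hm n
  -- degree bound on the coefficient polynomials
  have hdeg : ∀ n k, k ≤ m → (h ^ (m - k) * S3.gg h δ n k).natDegree ≤ m * δ := by
    intro n k hk
    refine le_trans Polynomial.natDegree_mul_le ?_
    have h1 : (h ^ (m - k)).natDegree ≤ (m - k) * δ :=
      le_trans Polynomial.natDegree_pow_le (by rw [hδ])
    have h2 := S3.gg_natDegree_le h hδ n k
    have h5 : (m - k) * δ + k * δ = m * δ := by
      rw [← add_mul]; congr 1; omega
    omega
  -- upper bound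
  have hupper : ∀ n, degV (S3.FF p (p ^ N) h δ m n) ≤ m * δ := by
    intro n
    rw [S3.FF]
    refine S3.degV_sum_le _ _ _ fun k hk => ?_
    rw [Finset.mem_range] at hk
    refine le_trans (S3.degV_mul_le _ _) ?_
    have h3 := S3.degV_uu_sub_one_pow_le (p := p) (L := p ^ N) (p ^ N - 1 - m + k)
    have h4 : degV (aeval (vv p (p ^ N)) (h ^ (m - k) * S3.gg h δ n k)) ≤ m * δ :=
      le_trans (S3.degV_aeval_vv_le _ (by have := hdeg n k (by omega); omega)) (hdeg n k (by omega))
    omega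
  -- lower bound
  have hlower : ∀ n, m * δ ≤ degV (S3.FF p (p ^ N) h δ m n) := by
    intro n
    set c : ℕ → ZMod p := fun k => (h ^ (m - k) * S3.gg h δ n k).coeff (m * δ) with hc
    refine S3.le_degV_of_σ_ne hmδ _ ?_
    have hσ : S3.σ ((m * δ : ℕ) : ZMod (p ^ N)) (S3.FF p (p ^ N) h δ m n)
        = ∑ k ∈ Finset.range (m + 1), (S3.up p (p ^ N) - 1) ^ (p ^ N - 1 - m + k)
            * AddMonoidAlgebra.single 0 (c k) := by
      rw [S3.FF, map_sum]
      refine Finset.sum_congr rfl fun k hk => ?_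
      rw [Finset.mem_range] at hk
      rw [S3.σ_uu_sub_one_pow_mul, S3.σ_aeval _ hmδ (by have := hdeg n k (by omega); omega)]
    rw [hσ]
    intro h0
    have hc0 : c 0 ≠ 0 := by
      rw [hc]
      simp only [Nat.sub_zero, S3.gg_zero_right, mul_one]
      rw [← hδ, Polynomial.coeff_pow_mul_natDegree]
      exact pow_ne_zero _ (Polynomial.leadingCoeff_ne_zero.mpr
        (fun hh0 => hh1 (by rw [hh0]; simp)))
    set Y : S3.S p (p ^ N) := ∑ k ∈ Finset.range m,
        (S3.up p (p ^ N) - 1) ^ k * AddMonoidAlgebra.single 0 (c (k + 1)) with hY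
    have hB : ∑ k ∈ Finset.range (m + 1),
          (S3.up p (p ^ N) - 1) ^ k * AddMonoidAlgebra.single 0 (c k)
        = algebraMap (ZMod p) (S3.S p (p ^ N)) (c 0) + (S3.up p (p ^ N) - 1) * Y := by
      rw [Finset.sum_range_succ'
        (fun k => (S3.up p (p ^ N) - 1) ^ k * AddMonoidAlgebra.single 0 (c k))]
      have hsingle : (S3.up p (p ^ N) - 1) ^ 0 * AddMonoidAlgebra.single (0 : ZMod (p ^ N)) (c 0)
          = algebraMap (ZMod p) (S3.S p (p ^ N)) (c 0) := by
        rw [pow_zero, one_mul, Algebra.algebraMap_eq_smul_one, AddMonoidAlgebra.one_def,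
          AddMonoidAlgebra.smul_single, smul_eq_mul, mul_one]
      have hsum : ∑ k ∈ Finset.range m,
            (S3.up p (p ^ N) - 1) ^ (k + 1) * AddMonoidAlgebra.single (0 : ZMod (p ^ N)) (c (k + 1))
          = (S3.up p (p ^ N) - 1) * Y := by
        rw [hY, Finset.mul_sum]
        refine Finset.sum_congr rfl fun k _ => ?_
        rw [pow_succ]
        ring
      rw [hsingle, hsum]
      exact add_comm _ _
    have hfac : ∑ k ∈ Finset.range (m + 1), (S3.up p (p ^ N) - 1) ^ (p ^ N - 1 - m + k)
          * AddMonoidAlgebra.single 0 (c k)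
        = (S3.up p (p ^ N) - 1) ^ (p ^ N - 1 - m)
          * ∑ k ∈ Finset.range (m + 1),
              (S3.up p (p ^ N) - 1) ^ k * AddMonoidAlgebra.single 0 (c k) := by
      rw [Finset.mul_sum]
      refine Finset.sum_congr rfl fun k _ => ?_
      rw [pow_add]
      ring
    rw [hfac, hB] at h0
    have hunit : IsUnit (algebraMap (ZMod p) (S3.S p (p ^ N)) (c 0)
        + (S3.up p (p ^ N) - 1) * Y) :=
      S3.isUnit_aux (c 0) hc0 _ Y S3.isNilpotent_up_sub_one
    obtain ⟨u, hu⟩ := hunit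
    rw [← hu] at h0
    have hz : (S3.up p (p ^ N) - 1) ^ (p ^ N - 1 - m) = 0 := (Units.mul_left_eq_zero u).mp h0
    have hz2 : (S3.up p (p ^ N) - 1) ^ (p ^ N - 1) = 0 := by
      rw [show p ^ N - 1 = (p ^ N - 1 - m) + m by omega, pow_add, hz, zero_mul]
    exact S3.up_sub_one_pow_pred_ne_zero hN hz2
  refine ⟨fun n => ?_, fun n => ?_⟩
  · rw [hconj n]
    exact le_antisymm (hupper n) (hlower n)
  · rw [hconj n]
    exact hupper n

end
end

section
/- Let p be a prime and let f ∈ 𝔽_p[x] have at least two nonzero coefficients. For every integer w ≥ 0 there exists L₀ (depending only on w and deg f) such that for every N with L = p^N ≥ L₀ the following holds: if W ∈ R and there exists an integer a such that f(v)^n·f(u^{−1}v^{−1})^n·W is (a, a+w)-local for every integer n ≥ 0, then W = 0. (This corresponds to the statement that a single fractal symmetry admits no non-trivial local SPT phase.) -/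
open Polynomial

noncomputable section

namespace Statement10Aux

/-- `v^z` as an element of `R`. -/
lemma vUnit_zpow (p L : ℕ) (z : ℤ) :
    ((vUnit p L ^ z : (R p L)ˣ) : R p L)
      = AddMonoidAlgebra.single ((0 : ZMod L), (z : ZMod L)) (1 : ZMod p) := by
  cases z with
  | ofNat n =>
      rw [Int.ofNat_eq_coe, zpow_natCast, Units.val_pow_eq_pow_val]
      show (AddMonoidAlgebra.single ((0 : ZMod L), (1 : ZMod L)) (1 : ZMod p)) ^ n = _
      rw [AddMonoidAlgebra.single_pow]
      simp [Prod.smul_mk, nsmul_eq_mul]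
  | negSucc n =>
      rw [zpow_negSucc, ← inv_pow, Units.val_pow_eq_pow_val]
      show (AddMonoidAlgebra.single ((0 : ZMod L), (-1 : ZMod L)) (1 : ZMod p)) ^ (n + 1) = _
      rw [AddMonoidAlgebra.single_pow]
      simp [Prod.smul_mk, nsmul_eq_mul, Int.cast_negSucc]

/-- Extracting the locality window from a `degV` bound. -/
lemma coeff_window {p L w : ℕ} (b : ZMod L) (X : R p L)
    (h : degV ((AddMonoidAlgebra.single ((0 : ZMod L), -b) (1 : ZMod p)) * X) ≤ w)
    (s : ZMod L × ZMod L) (hs : X.coeff s ≠ 0) : (s.2 - b).val ≤ w := by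
  have hmem : (s.1, s.2 - b) ∈
      ((AddMonoidAlgebra.single ((0 : ZMod L), -b) (1 : ZMod p)) * X).coeff.support := by
    rw [Finsupp.mem_support_iff, AddMonoidAlgebra.coeff_single_mul_apply]
    have : (-((0 : ZMod L), -b) + (s.1, s.2 - b)) = s := by
      ext <;> simp
    rw [this, one_mul]
    exact hs
  exact le_trans (Finset.le_sup (f := fun a : ZMod L × ZMod L => a.2.val) hmem) h

/-- Evaluating a polynomial at a monomial. -/
lemma aeval_single_eq (p L : ℕ) (f : (ZMod p)[X]) (g : ZMod L × ZMod L) :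
    aeval (AddMonoidAlgebra.single g (1 : ZMod p)) f
      = ∑ k ∈ f.support, AddMonoidAlgebra.single (k • g) (f.coeff k) := by
  rw [aeval_def, eval₂_eq_sum, Polynomial.sum_def]
  refine Finset.sum_congr rfl fun k _ => ?_
  rw [AddMonoidAlgebra.single_pow, one_pow]
  have halg : algebraMap (ZMod p) (R p L) (f.coeff k)
      = AddMonoidAlgebra.single (0 : ZMod L × ZMod L) (f.coeff k) := by
    rw [AddMonoidAlgebra.coe_algebraMap]
    simp
  rw [halg, AddMonoidAlgebra.single_mul_single, zero_add, mul_one]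

/-- Frobenius: raising a sum of monomials to a `p`-power power. -/
lemma sum_single_pow_char_pow (p L : ℕ) [Fact p.Prime] (S : Finset ℕ) (c : ℕ → ZMod p)
    (g : ZMod L × ZMod L) (K : ℕ) :
    (∑ k ∈ S, AddMonoidAlgebra.single (k • g) (c k)) ^ p ^ K
      = ∑ k ∈ S, AddMonoidAlgebra.single ((p ^ K * k) • g) (c k) := by
  have hinj : Function.Injective (algebraMap (ZMod p) (R p L)) := by
    intro a b hab
    have h2 : AddMonoidAlgebra.single (0 : ZMod L × ZMod L) a
        = AddMonoidAlgebra.single (0 : ZMod L × ZMod L) b := by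
      have := hab
      rw [show (algebraMap (ZMod p) (R p L)) a
          = AddMonoidAlgebra.single (0 : ZMod L × ZMod L) a by
            rw [AddMonoidAlgebra.coe_algebraMap]; simp,
        show (algebraMap (ZMod p) (R p L)) b
          = AddMonoidAlgebra.single (0 : ZMod L × ZMod L) b by
            rw [AddMonoidAlgebra.coe_algebraMap]; simp] at this
      exact this
    simpa using congrArg (fun x : R p L => x.coeff 0) h2
  haveI : CharP (R p L) p := charP_of_injective_algebraMap hinj p
  rw [sum_pow_char_pow]
  refine Finset.sum_congr rfl fun k _ => ?_
  rw [AddMonoidAlgebra.single_pow, ZMod.pow_card_pow, smul_smul]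

end Statement10Aux

/-- a single fractal symmetry admits no nontrivial local SPT phase: if `f`
has at least two nonzero coefficients, then for every width `w` and all large enough
`L = p^N`, any `W ∈ R` such that `f(v)^n · f(u⁻¹v⁻¹)^n · W` is `(a, a+w)`-local for
some `a` and all `n ≥ 0` must vanish. -/
theorem statement10 (p : ℕ) (hp : p.Prime) (f : (ZMod p)[X]) (hf : 2 ≤ f.support.card) :
    ∀ w : ℕ, ∃ L₀ : ℕ, ∀ N : ℕ, 1 ≤ N → L₀ ≤ p ^ N →
      ∀ W : R p (p ^ N),
        (∃ a : ℤ,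
          ∀ n : ℕ,
            degV ((((vUnit p (p ^ N)) ^ (-a) : (R p (p ^ N))ˣ) : R p (p ^ N)) *
                (aeval (vv p (p ^ N)) f ^ n *
                  aeval
                    (((uUnit p (p ^ N) * vUnit p (p ^ N))⁻¹ : (R p (p ^ N))ˣ) :
                      R p (p ^ N)) f ^ n *
                  W)) ≤ w) →
        W = 0 := by
  haveI : Fact p.Prime := ⟨hp⟩
  intro w
  have hSne : f.support.Nonempty := Finset.card_pos.mp (by omega)
  have hk12 : f.support.min' hSne < f.support.max' hSne :=
    Finset.min'_lt_max'_of_card _ hf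
  set k₁ := f.support.min' hSne with hk₁def
  set k₂ := f.support.max' hSne with hk₂def
  obtain ⟨D, hDeq⟩ : ∃ d : ℕ, k₂ = k₁ + d := ⟨k₂ - k₁, by omega⟩
  have hDpos : 0 < D := by omega
  set m : ℕ := p ^ (w + 1) with hmdef
  have hwm : w < m := by
    calc w < 2 ^ (w + 1) :=
          lt_of_lt_of_le (Nat.lt_two_pow_self (n := w)) (Nat.pow_le_pow_right (by norm_num) (Nat.le_succ w))
      _ ≤ p ^ (w + 1) := Nat.pow_le_pow_left hp.two_le _
  refine ⟨2 * D * m + w + 1, fun N hN hLbig W hWloc => ?_⟩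
  haveI : NeZero (p ^ N) := ⟨(pow_pos hp.pos N).ne'⟩
  obtain ⟨a, ha⟩ := hWloc
  set b : ZMod (p ^ N) := (a : ZMod (p ^ N)) with hbdef
  set A := aeval (vv p (p ^ N)) f with hAdef
  set B := aeval (((uUnit p (p ^ N) * vUnit p (p ^ N))⁻¹ : (R p (p ^ N))ˣ) : R p (p ^ N)) f with hBdef
  -- rewrite the unit `v ^ (-a)` as a single monomial
  have hz : (((vUnit p (p ^ N)) ^ (-a) : (R p (p ^ N))ˣ) : R p (p ^ N))
      = AddMonoidAlgebra.single ((0 : ZMod (p ^ N)), -b) (1 : ZMod p) := by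
    rw [Statement10Aux.vUnit_zpow, Int.cast_neg]
  -- the window condition for the coefficients
  have HW : ∀ (n : ℕ) (s : ZMod (p ^ N) × ZMod (p ^ N)), (A ^ n * B ^ n * W).coeff s ≠ 0 →
      (s.2 - b).val ≤ w := by
    intro n s hs
    have h := ha n
    rw [hz] at h
    exact Statement10Aux.coeff_window b _ h s hs
  have h0 : ∀ s : ZMod (p ^ N) × ZMod (p ^ N), W.coeff s ≠ 0 → (s.2 - b).val ≤ w := by
    intro s hs
    exact HW 0 s (by simpa using hs)
  have hL1 : 2 * D * m + w + 1 ≤ (p ^ N) := hLbig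
  -- the key arithmetic fact about windows in `ZMod (p ^ N)`
  have key : ∀ (x : ZMod (p ^ N)) (δ : ℕ), δ ≤ 2 * D → (x - b).val ≤ w →
      ((x + ((δ * m : ℕ) : ZMod (p ^ N))) - b).val ≤ w → δ = 0 := by
    intro x δ hδ h1 h2
    by_contra hδ0
    have h1δ : 1 ≤ δ := Nat.one_le_iff_ne_zero.mpr hδ0
    have hδm : δ * m ≤ 2 * D * m := Nat.mul_le_mul_right m hδ
    have hmδ : m ≤ δ * m := Nat.le_mul_of_pos_left m h1δ
    have hlt : δ * m < (p ^ N) := by omega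
    have hveq : ((δ * m : ℕ) : ZMod (p ^ N)).val = δ * m := ZMod.val_cast_of_lt hlt
    have hrw : x + ((δ * m : ℕ) : ZMod (p ^ N)) - b = (x - b) + ((δ * m : ℕ) : ZMod (p ^ N)) := by ring
    rw [hrw] at h2
    rw [ZMod.val_add_of_lt (by rw [hveq]; omega)] at h2
    rw [hveq] at h2
    omega
  -- expansions of `A ^ m` and `B ^ m`
  have hvv : vv p (p ^ N) = AddMonoidAlgebra.single ((0 : ZMod (p ^ N)), (1 : ZMod (p ^ N))) (1 : ZMod p) := rfl
  have hBu : (((uUnit p (p ^ N) * vUnit p (p ^ N))⁻¹ : (R p (p ^ N))ˣ) : R p (p ^ N))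
      = AddMonoidAlgebra.single ((-1 : ZMod (p ^ N)), (-1 : ZMod (p ^ N))) (1 : ZMod p) := by
    rw [mul_inv_rev, Units.val_mul]
    show AddMonoidAlgebra.single ((0 : ZMod (p ^ N)), (-1 : ZMod (p ^ N))) (1 : ZMod p) *
        AddMonoidAlgebra.single ((-1 : ZMod (p ^ N)), (0 : ZMod (p ^ N))) (1 : ZMod p) = _
    rw [AddMonoidAlgebra.single_mul_single]
    norm_num
  have hA : A ^ m = ∑ k ∈ f.support,
      AddMonoidAlgebra.single ((0 : ZMod (p ^ N)), ((m * k : ℕ) : ZMod (p ^ N))) (f.coeff k) := by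
    rw [hAdef, hvv, Statement10Aux.aeval_single_eq, hmdef,
      Statement10Aux.sum_single_pow_char_pow]
    refine Finset.sum_congr rfl fun k _ => ?_
    congr 1
    rw [← hmdef]
    simp [Prod.smul_mk, nsmul_eq_mul]
  have hB : B ^ m = ∑ j ∈ f.support,
      AddMonoidAlgebra.single ((-((m * j : ℕ) : ZMod (p ^ N)), -((m * j : ℕ) : ZMod (p ^ N))))
        (f.coeff j) := by
    rw [hBdef, hBu, Statement10Aux.aeval_single_eq, hmdef,
      Statement10Aux.sum_single_pow_char_pow]
    refine Finset.sum_congr rfl fun j _ => ?_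
    congr 1
    rw [← hmdef]
    simp [Prod.smul_mk, nsmul_eq_mul]
  -- the coefficient formula for the product
  have hP : ∀ y : ZMod (p ^ N) × ZMod (p ^ N), (A ^ m * B ^ m * W).coeff y =
      ∑ k ∈ f.support, f.coeff k * ∑ j ∈ f.support, f.coeff j *
        W.coeff (y.1 + ((m * j : ℕ) : ZMod (p ^ N)),
           y.2 + ((m * j : ℕ) : ZMod (p ^ N)) - ((m * k : ℕ) : ZMod (p ^ N))) := by
    intro y
    rw [mul_assoc, hA, Finset.sum_mul, AddMonoidAlgebra.coeff_sum, Finset.sum_apply']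
    refine Finset.sum_congr rfl fun k _ => ?_
    rw [AddMonoidAlgebra.coeff_single_mul_apply]
    congr 1
    rw [hB, Finset.sum_mul, AddMonoidAlgebra.coeff_sum, Finset.sum_apply']
    refine Finset.sum_congr rfl fun j _ => ?_
    rw [AddMonoidAlgebra.coeff_single_mul_apply]
    have harg : -((-((m * j : ℕ) : ZMod (p ^ N)), -((m * j : ℕ) : ZMod (p ^ N))))
        + (-(((0 : ZMod (p ^ N)), ((m * k : ℕ) : ZMod (p ^ N)))) + y)
        = (y.1 + ((m * j : ℕ) : ZMod (p ^ N)),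
           y.2 + ((m * j : ℕ) : ZMod (p ^ N)) - ((m * k : ℕ) : ZMod (p ^ N))) := by
      ext
      · simp [add_comm]
      · simp
        ring
    rw [harg]
  -- now suppose `W ≠ 0`
  by_contra hW0
  obtain ⟨s₀, hs₀⟩ := Finsupp.support_nonempty_iff.mpr (fun h => hW0 (AddMonoidAlgebra.coeff_eq_zero.mp h))
  obtain ⟨i₀, t₀⟩ := s₀
  have hWs₀ : W.coeff (i₀, t₀) ≠ 0 := Finsupp.mem_support_iff.mp hs₀
  set g₀ : ZMod (p ^ N) × ZMod (p ^ N) :=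
    (i₀ - ((m * k₁ : ℕ) : ZMod (p ^ N)),
     t₀ + ((m * k₂ : ℕ) : ZMod (p ^ N)) - ((m * k₁ : ℕ) : ZMod (p ^ N))) with hg₀
  -- all terms except `(k₂, k₁)` vanish
  have hterm : ∀ k ∈ f.support, ∀ j ∈ f.support, ¬(k = k₂ ∧ j = k₁) →
      W.coeff (g₀.1 + ((m * j : ℕ) : ZMod (p ^ N)),
         g₀.2 + ((m * j : ℕ) : ZMod (p ^ N)) - ((m * k : ℕ) : ZMod (p ^ N))) = 0 := by
    intro k hk j hj hne
    by_contra hWc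
    have hj1 : k₁ ≤ j := Finset.min'_le _ _ hj
    have hj2 : j ≤ k₂ := Finset.le_max' _ _ hj
    have hk1 : k₁ ≤ k := Finset.min'_le _ _ hk
    have hk2 : k ≤ k₂ := Finset.le_max' _ _ hk
    obtain ⟨d1, hd1⟩ : ∃ d, j = k₁ + d := ⟨j - k₁, by omega⟩
    obtain ⟨d2, hd2⟩ : ∃ d, k₂ = k + d := ⟨k₂ - k, by omega⟩
    have harg2 : g₀.2 + ((m * j : ℕ) : ZMod (p ^ N)) - ((m * k : ℕ) : ZMod (p ^ N))
        = t₀ + (((d1 + d2) * m : ℕ) : ZMod (p ^ N)) := by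
      rw [hg₀]
      push_cast [show m * j = m * k₁ + d1 * m from by rw [hd1]; ring,
        show m * k₂ = m * k + d2 * m from by rw [hd2]; ring]
      ring
    have h2 : ((g₀.2 + ((m * j : ℕ) : ZMod (p ^ N)) - ((m * k : ℕ) : ZMod (p ^ N))) - b).val ≤ w :=
      h0 _ hWc
    rw [harg2] at h2
    have hδ := key t₀ (d1 + d2) (by omega) (h0 (i₀, t₀) hWs₀) h2
    exact hne ⟨by omega, by omega⟩
  -- the coefficient of the product at `g₀`
  have hcoeff : (A ^ m * B ^ m * W).coeff g₀ = f.coeff k₂ * (f.coeff k₁ * W.coeff (i₀, t₀)) := by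
    rw [hP]
    rw [Finset.sum_eq_single k₂]
    · rw [Finset.sum_eq_single k₁]
      · have harg : (g₀.1 + ((m * k₁ : ℕ) : ZMod (p ^ N)),
            g₀.2 + ((m * k₁ : ℕ) : ZMod (p ^ N)) - ((m * k₂ : ℕ) : ZMod (p ^ N)))
            = ((i₀ : ZMod (p ^ N)), (t₀ : ZMod (p ^ N))) := by
          rw [hg₀]
          ext
          · simp
          · simp
        rw [harg]
      · intro j hj hjne
        rw [hterm k₂ (Finset.max'_mem _ _) j hj (fun h => hjne h.2), mul_zero]
      · intro h
        exact absurd (Finset.min'_mem _ _) h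
    · intro k hk hkne
      rw [Finset.sum_eq_zero fun j hj => by
        rw [hterm k hk j hj (fun h => hkne h.1), mul_zero], mul_zero]
    · intro h
      exact absurd (Finset.max'_mem _ _) h
  have hg₀ne : (A ^ m * B ^ m * W).coeff g₀ ≠ 0 := by
    rw [hcoeff]
    exact mul_ne_zero (Polynomial.mem_support_iff.mp (Finset.max'_mem _ _))
      (mul_ne_zero (Polynomial.mem_support_iff.mp (Finset.min'_mem _ _)) hWs₀)
  have hg2 := HW m g₀ hg₀ne
  have hDm : g₀.2 = t₀ + ((D * m : ℕ) : ZMod (p ^ N)) := by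
    rw [hg₀]
    push_cast [show m * k₂ = m * k₁ + D * m from by rw [hDeq]; ring]
    ring
  rw [hDm] at hg2
  have := key t₀ D (by omega) (h0 (i₀, t₀) hWs₀) hg2
  omega

end
end
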